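/- (Bias of CIPS with estimated click probabilities.) Given estimated click probabilities p̂_c : 𝒳 → 𝒜 → ℛ → ℝ, set p̂_c(x,a,μ) := E_{A∼μ(x)}[p̂_c(x,a,A)] for a policy μ, and ŵ(x,a) := p̂_c(x,a,π)/p̂_c(x,a,π₀) (with t/0 := 0). Under the independence of potential rewards condition, the click–reward factorization condition, and the click-wise common support condition, the estimator's bias over one logged sample satisfies E_{x∼p, A∼π₀(x), ω∼κ(x,A)}[ ∑_{a∈𝒜} ŵ(x,a)·C(ω,a)·R(ω,a) ] − V(π) = E_{x∼p}[ ∑_{a∈𝒜} p_c(x,a,π₀)·( ŵ(x,a) − w(x,a) )·q_r(x,a) ], where w(x,a) := p_c(x,a,π)/p_c(x,a,π₀) with t/0 := 0. -/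

import Mathlib

open scoped BigOperators Classical

/-- Expectation of a real-valued function under a PMF on a finite type. -/
noncomputable def pexp {X : Type*} [Fintype X] (p : PMF X) (f : X → ℝ) : ℝ :=
  ∑ x, (p x).toReal * f x

/-- Variance of a real-valued function under a PMF on a finite type. -/
noncomputable def pvar {X : Type*} [Fintype X] (p : PMF X) (f : X → ℝ) : ℝ :=
  pexp p (fun x => (f x - pexp p f) ^ 2)

/-- Joint distribution of one logged sample (x, A, ω) with x ∼ p, A ∼ π₀(x), ω ∼ κ(x,A). -/
noncomputable def logged {𝒳 ℛ Ω : Type*} (p : PMF 𝒳) (π₀ : 𝒳 → PMF ℛ)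
    (κ : 𝒳 → ℛ → PMF Ω) : PMF (𝒳 × ℛ × Ω) :=
  p.bind fun x => (π₀ x).bind fun A => (κ x A).map fun ω => (x, A, ω)

/-- Click probability of action a at context x given ranking A: p_c(x,a,A). -/
noncomputable def pcA {𝒳 ℛ Ω 𝒜 : Type*} [Fintype Ω]
    (κ : 𝒳 → ℛ → PMF Ω) (C : Ω → 𝒜 → ℝ) (x : 𝒳) (a : 𝒜) (A : ℛ) : ℝ :=
  pexp (κ x A) fun ω => C ω a

/-- Marginalized click probability of action a at context x under policy μ: p_c(x,a,μ). -/
noncomputable def pcPol {𝒳 ℛ Ω 𝒜 : Type*} [Fintype Ω] [Fintype ℛ]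
    (κ : 𝒳 → ℛ → PMF Ω) (C : Ω → 𝒜 → ℝ) (μ : 𝒳 → PMF ℛ) (x : 𝒳) (a : 𝒜) : ℝ :=
  pexp (μ x) fun A => pcA κ C x a A

/-- Policy value V(π). -/
noncomputable def polValue {𝒳 ℛ Ω 𝒜 : Type*} [Fintype 𝒳] [Fintype ℛ] [Fintype Ω] [Fintype 𝒜]
    (p : PMF 𝒳) (π : 𝒳 → PMF ℛ) (κ : 𝒳 → ℛ → PMF Ω) (C R : Ω → 𝒜 → ℝ) : ℝ :=
  pexp p fun x => pexp (π x) fun A => pexp (κ x A) fun ω => ∑ a, C ω a * R ω a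

/-!
Both the estimator's mean and `V(π)` are click-weighted sums: by the click–reward
factorization, for any weights `w`,
`E_{A∼μ(x)} E_{ω∼κ(x,A)} [∑ₐ wₐ C(ω,a) R(ω,a)] = ∑ₐ wₐ p_c(x,a,μ) q_r(x,a)`.
Taking `μ = π₀, w = ŵ` and `μ = π, w = 1` and subtracting leaves
`p_c(x,a,π₀) ŵ − p_c(x,a,π)`, and `p_c(x,a,π) = p_c(x,a,π₀) w(x,a)` holds even where
`p_c(x,a,π₀) = 0`, by common support.
-/

section pexp

variable {X : Type*} [Fintype X]

lemma pexp_pure (b : X) (f : X → ℝ) : pexp (PMF.pure b) f = f b := by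
  simp [pexp, PMF.pure_apply, apply_ite ENNReal.toReal]

lemma pexp_bind {Y : Type*} [Fintype Y] (p : PMF X) (g : X → PMF Y) (f : Y → ℝ) :
    pexp (p.bind g) f = pexp p fun x => pexp (g x) f := by
  have h_toReal : ∀ y, (∑ x, p x * g x y).toReal = ∑ x, (p x).toReal * (g x y).toReal := by
    intro y
    rw [ENNReal.toReal_sum fun x _ => ENNReal.mul_ne_top (p.apply_ne_top x) ((g x).apply_ne_top y)]
    simp only [ENNReal.toReal_mul]
  simp only [pexp, PMF.bind_apply, tsum_fintype, h_toReal, Finset.sum_mul, Finset.mul_sum,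
    mul_assoc]
  exact Finset.sum_comm

lemma pexp_map {Y : Type*} [Fintype Y] (p : PMF X) (h : X → Y) (f : Y → ℝ) :
    pexp (p.map h) f = pexp p fun x => f (h x) := by
  simp only [PMF.map, pexp_bind, Function.comp_apply, pexp_pure]

lemma pexp_sum {ι : Type*} [Fintype ι] (p : PMF X) (g : ι → X → ℝ) :
    pexp p (fun x => ∑ i, g i x) = ∑ i, pexp p (g i) := by
  simp only [pexp, Finset.mul_sum]
  exact Finset.sum_comm

lemma pexp_const_mul (p : PMF X) (c : ℝ) (f : X → ℝ) :
    pexp p (fun x => c * f x) = c * pexp p f := by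
  simp only [pexp, Finset.mul_sum, mul_left_comm]

lemma pexp_mul_const (p : PMF X) (c : ℝ) (f : X → ℝ) :
    pexp p (fun x => f x * c) = pexp p f * c := by
  simp only [mul_comm _ c, pexp_const_mul]

lemma pexp_sub (p : PMF X) (f g : X → ℝ) :
    pexp p (fun x => f x - g x) = pexp p f - pexp p g := by
  simp only [pexp, mul_sub, Finset.sum_sub_distrib]

lemma pexp_nonneg (p : PMF X) {f : X → ℝ} (hf : ∀ x, 0 ≤ f x) : 0 ≤ pexp p f :=
  Finset.sum_nonneg fun x _ => mul_nonneg ENNReal.toReal_nonneg (hf x)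

end pexp

lemma pexp_logged {𝒳 ℛ Ω : Type*} [Fintype 𝒳] [Fintype ℛ] [Fintype Ω] (p : PMF 𝒳)
    (π₀ : 𝒳 → PMF ℛ) (κ : 𝒳 → ℛ → PMF Ω) (f : 𝒳 × ℛ × Ω → ℝ) :
    pexp (logged p π₀ κ) f
      = pexp p fun x => pexp (π₀ x) fun A => pexp (κ x A) fun ω => f (x, A, ω) := by
  simp only [logged, pexp_bind, pexp_map]

section clicks

variable {𝒳 ℛ Ω 𝒜 : Type*} [Fintype ℛ] [Fintype Ω]
  {κ : 𝒳 → ℛ → PMF Ω} {C R : Ω → 𝒜 → ℝ} {q_r : 𝒳 → 𝒜 → ℝ}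

lemma pcPol_nonneg (hC : ∀ ω a, 0 ≤ C ω a) (μ : 𝒳 → PMF ℛ) (x : 𝒳) (a : 𝒜) :
    0 ≤ pcPol κ C μ x a :=
  pexp_nonneg _ fun _ => pexp_nonneg _ fun ω => hC ω a

lemma pcPol_mul_div_pcPol {π π₀ : 𝒳 → PMF ℛ} (hC : ∀ ω a, 0 ≤ C ω a)
    (hsupp : ∀ x a, 0 < pcPol κ C π x a → 0 < pcPol κ C π₀ x a) (x : 𝒳) (a : 𝒜) :
    pcPol κ C π₀ x a * (pcPol κ C π x a / pcPol κ C π₀ x a) = pcPol κ C π x a :=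
  mul_div_cancel_of_imp' fun h0 =>
    ((pcPol_nonneg hC π x a).eq_or_lt.resolve_right fun hpos => (hsupp x a hpos).ne' h0).symm

lemma pexp_weighted_clickReward [Fintype 𝒜]
    (hfact : ∀ x a A, pexp (κ x A) (fun ω => C ω a * R ω a) = pcA κ C x a A * q_r x a)
    (μ : 𝒳 → PMF ℛ) (x : 𝒳) (w : 𝒜 → ℝ) :
    (pexp (μ x) fun A => pexp (κ x A) fun ω => ∑ a, w a * (C ω a * R ω a))
      = ∑ a, w a * (pcPol κ C μ x a * q_r x a) := by
  simp only [pexp_sum, pexp_const_mul, hfact, pexp_mul_const, pcPol]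

lemma polValue_eq_sum_pcPol_mul [Fintype 𝒳] [Fintype 𝒜]
    (hfact : ∀ x a A, pexp (κ x A) (fun ω => C ω a * R ω a) = pcA κ C x a A * q_r x a)
    (p : PMF 𝒳) (π : 𝒳 → PMF ℛ) :
    polValue p π κ C R = pexp p fun x => ∑ a, pcPol κ C π x a * q_r x a := by
  unfold polValue
  congr 1
  funext x
  simpa only [one_mul] using pexp_weighted_clickReward hfact π x fun _ => 1

lemma pexp_logged_weighted_clickReward [Fintype 𝒳] [Fintype 𝒜]
    (hfact : ∀ x a A, pexp (κ x A) (fun ω => C ω a * R ω a) = pcA κ C x a A * q_r x a)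
    (p : PMF 𝒳) (π₀ : 𝒳 → PMF ℛ) (w : 𝒳 → 𝒜 → ℝ) :
    pexp (logged p π₀ κ) (fun s => ∑ a, w s.1 a * C s.2.2 a * R s.2.2 a)
      = pexp p fun x => ∑ a, w x a * (pcPol κ C π₀ x a * q_r x a) := by
  rw [pexp_logged]
  congr 1
  funext x
  simpa only [mul_assoc] using pexp_weighted_clickReward hfact π₀ x (w x)

end clicks

theorem CIPS_bias_estimated_clicks_general {𝒳 ℛ Ω 𝒜 : Type*}
    [Fintype 𝒳] [Fintype ℛ] [Fintype Ω] [Fintype 𝒜]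
    (p : PMF 𝒳) (π π₀ : 𝒳 → PMF ℛ) (κ : 𝒳 → ℛ → PMF Ω)
    (C R : Ω → 𝒜 → ℝ) (hC : ∀ ω a, C ω a = 0 ∨ C ω a = 1)
    (q_r : 𝒳 → 𝒜 → ℝ)
    (hfact : ∀ x a A,
      pexp (κ x A) (fun ω => C ω a * R ω a) = pcA κ C x a A * q_r x a)
    (hsupp : ∀ x a, 0 < pcPol κ C π x a → 0 < pcPol κ C π₀ x a)
    (phat : 𝒳 → 𝒜 → ℛ → ℝ) :
    pexp (logged p π₀ κ)
        (fun s => ∑ a,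
          ((pexp (π s.1) (fun A => phat s.1 a A)) /
            (pexp (π₀ s.1) (fun A => phat s.1 a A))) * C s.2.2 a * R s.2.2 a)
      - polValue p π κ C R
    = pexp p (fun x => ∑ a,
        pcPol κ C π₀ x a *
          ((pexp (π x) (fun A => phat x a A)) / (pexp (π₀ x) (fun A => phat x a A))
            - pcPol κ C π x a / pcPol κ C π₀ x a) * q_r x a) := by
  have hC_nonneg : ∀ ω a, 0 ≤ C ω a := fun ω a => by rcases hC ω a with h | h <;> simp [h]
  rw [pexp_logged_weighted_clickReward hfact p π₀
      fun x a => pexp (π x) (fun A => phat x a A) / pexp (π₀ x) (fun A => phat x a A),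
    polValue_eq_sum_pcPol_mul hfact, ← pexp_sub]
  congr 1
  funext x
  rw [← Finset.sum_sub_distrib]
  refine Finset.sum_congr rfl fun a _ => ?_
  linear_combination q_r x a * pcPol_mul_div_pcPol hC_nonneg hsupp x a

/-- Bias of CIPS with estimated click probabilities. -/
theorem CIPS_bias_estimated_clicks {𝒳 ℛ Ω 𝒜 : Type*}
    [Fintype 𝒳] [Nonempty 𝒳] [Fintype ℛ] [Nonempty ℛ] [Fintype Ω] [Nonempty Ω] [Fintype 𝒜]
    (p : PMF 𝒳) (π π₀ : 𝒳 → PMF ℛ) (κ : 𝒳 → ℛ → PMF Ω)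
    (C R : Ω → 𝒜 → ℝ) (hC : ∀ ω a, C ω a = 0 ∨ C ω a = 1)
    (q_r : 𝒳 → 𝒜 → ℝ)
    (hind : ∀ x a A, pexp (κ x A) (fun ω => R ω a) = q_r x a)
    (hfact : ∀ x a A,
      pexp (κ x A) (fun ω => C ω a * R ω a) = pcA κ C x a A * q_r x a)
    (hsupp : ∀ x a, 0 < pcPol κ C π x a → 0 < pcPol κ C π₀ x a)
    (phat : 𝒳 → 𝒜 → ℛ → ℝ) :
    pexp (logged p π₀ κ)
        (fun s => ∑ a,
          ((pexp (π s.1) (fun A => phat s.1 a A)) /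
            (pexp (π₀ s.1) (fun A => phat s.1 a A))) * C s.2.2 a * R s.2.2 a)
      - polValue p π κ C R
    = pexp p (fun x => ∑ a,
        pcPol κ C π₀ x a *
          ((pexp (π x) (fun A => phat x a A)) / (pexp (π₀ x) (fun A => phat x a A))
            - pcPol κ C π x a / pcPol κ C π₀ x a) * q_r x a) :=
  CIPS_bias_estimated_clicks_general p π π₀ κ C R hC q_r hfact hsupp phat
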